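/- There exists a constant M₀ > 0 such that for every ξ₀ ∈ S^⊥ and every ξ ∈ ℝⁿ, |⟨ξ₀, ξ⟩|² ≤ M₀² |ξ₀|² Σ_{j=0}^{k_{ξ₀}} |√Q (Bᵀ)^j ξ|², where k_{ξ₀} is the index of ξ₀. -/

import Mathlib

open Matrix MeasureTheory

/-- The canonical Euclidean norm on `ℝⁿ`. -/
noncomputable def euclNorm {n : ℕ} (v : Fin n → ℝ) : ℝ := Real.sqrt (∑ i, v i ^ 2)

/-- The canonical Euclidean scalar product on `ℝⁿ`. -/
def euclInner {n : ℕ} (u v : Fin n → ℝ) : ℝ := ∑ i, u i * v i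

/-- Membership in `S = ⋂_{j=0}^{n-1} Ker(√Q (Bᵀ)^j)`, where `sq` stands for `√Q`. -/
def memS (n : ℕ) (B sq : Matrix (Fin n) (Fin n) ℝ) (η : Fin n → ℝ) : Prop :=
  ∀ j < n, (sq * Bᵀ ^ j).mulVec η = 0

/-- Membership in `S^⊥`, the Euclidean orthogonal complement of `S`. -/
def memSperp (n : ℕ) (B sq : Matrix (Fin n) (Fin n) ℝ) (ξ₀ : Fin n → ℝ) : Prop :=
  ∀ η : Fin n → ℝ, memS n B sq η → euclInner ξ₀ η = 0

/-- Membership in `V_k^⊥`, where `V_k = ⋂_{j=0}^{k} Ker(√Q (Bᵀ)^j)`. -/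
def memVperp (n : ℕ) (B sq : Matrix (Fin n) (Fin n) ℝ) (k : ℕ) (ξ₀ : Fin n → ℝ) : Prop :=
  ∀ η : Fin n → ℝ, (∀ j ≤ k, (sq * Bᵀ ^ j).mulVec η = 0) → euclInner ξ₀ η = 0

/-- The index `k_{ξ₀} = min {0 ≤ k ≤ r : ξ₀ ∈ V_k^⊥}` of a vector `ξ₀ ∈ S^⊥`. -/
noncomputable def kIndex (n : ℕ) (B sq : Matrix (Fin n) (Fin n) ℝ) (r : ℕ)
    (ξ₀ : Fin n → ℝ) : ℕ :=
  sInf {k | k ≤ r ∧ memVperp n B sq k ξ₀}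

/-- `r` is the smallest integer such that `S = ⋂_{j=0}^{r} Ker(√Q (Bᵀ)^j)`. -/
def IsSmallestr (n : ℕ) (B sq : Matrix (Fin n) (Fin n) ℝ) (r : ℕ) : Prop :=
  IsLeast {k | ∀ η : Fin n → ℝ,
    (∀ j ≤ k, (sq * Bᵀ ^ j).mulVec η = 0) ↔ memS n B sq η} r

/-- The positive semidefinite square root (removed from Mathlib; old definition restored). -/
noncomputable def Matrix.PosSemidef.sqrt {n 𝕜 : Type*} [Fintype n] [RCLike 𝕜] [PartialOrder 𝕜] [DecidableEq n]
    {A : Matrix n n 𝕜} (hA : A.PosSemidef) : Matrix n n 𝕜 :=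
  hA.1.eigenvectorUnitary.1 * diagonal ((↑) ∘ (Real.sqrt ·) ∘ hA.1.eigenvalues) *
    (star hA.1.eigenvectorUnitary : Matrix n n 𝕜)

/-- The symbol `a_t(ξ) = (1/2) ∫₀¹ |√Q e^{α t Bᵀ} ξ|^{2s} dα`. -/
noncomputable def symb (n : ℕ) (B sq : Matrix (Fin n) (Fin n) ℝ) (s t : ℝ)
    (ξ : Fin n → ℝ) : ℝ :=
  (1 / 2) * ∫ α in (0:ℝ)..1, euclNorm ((sq * NormedSpace.exp ((α * t) • Bᵀ)).mulVec ξ) ^ (2 * s)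

/-! On a finite-dimensional inner product space, a linear map `T` is injective on `(ker T)ᗮ`,
hence bounded below there: `‖x‖ ≤ C ‖T x‖`. Splitting `ξ` along `ker T ⊕ (ker T)ᗮ` then gives
`|⟪ξ₀, ξ⟫| ≤ C ‖ξ₀‖ ‖T ξ‖` for `ξ₀ ∈ (ker T)ᗮ`. For `T ξ = (√Q (Bᵀ)^j ξ)_{j ≤ k}`, valued in an
`L²` product, `(ker T)ᗮ = V_kᗮ`, which yields a constant `C_k`; as `k_{ξ₀} ≤ r`, the choice
`M₀² = ∑_{k ≤ r} C_k` serves every `ξ₀ ∈ S^⊥`. -/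

open scoped InnerProductSpace

section

variable {𝕜 E F : Type*} [RCLike 𝕜] [NormedAddCommGroup E] [InnerProductSpace 𝕜 E]
  [FiniteDimensional 𝕜 E] [NormedAddCommGroup F] [NormedSpace 𝕜 F]

open LinearMap Submodule

theorem LinearMap.exists_norm_le_mul_norm_of_mem_orthogonal_ker (T : E →ₗ[𝕜] F) :
    ∃ C > 0, ∀ x ∈ (ker T)ᗮ, ‖x‖ ≤ C * ‖T x‖ := by
  have hinj : ker (T.domRestrict (ker T)ᗮ) = ⊥ := by
    rw [ker_domRestrict, ← disjoint_iff_comap_eq_bot]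
    exact (orthogonal_disjoint _).symm
  obtain ⟨K, hK₀, hK⟩ := (T.domRestrict (ker T)ᗮ).exists_antilipschitzWith hinj
  exact ⟨K, hK₀, fun x hx => ZeroHomClass.bound_of_antilipschitz _ hK ⟨x, hx⟩⟩

theorem LinearMap.exists_norm_inner_le_of_mem_orthogonal_ker (T : E →ₗ[𝕜] F) :
    ∃ C > 0, ∀ x₀ ∈ (ker T)ᗮ, ∀ x, ‖⟪x₀, x⟫_𝕜‖ ≤ C * ‖x₀‖ * ‖T x‖ := by
  obtain ⟨C, hC₀, hC⟩ := T.exists_norm_le_mul_norm_of_mem_orthogonal_ker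
  refine ⟨C, hC₀, fun x₀ hx₀ x => ?_⟩
  obtain ⟨y, hy, z, hz, rfl⟩ := (ker T).exists_add_mem_mem_orthogonal x
  have hy₀ : ⟪x₀, y⟫_𝕜 = 0 := (mem_orthogonal' _ _).mp hx₀ y hy
  rw [inner_add_right, hy₀, zero_add, map_add, mem_ker.mp hy, zero_add]
  calc ‖⟪x₀, z⟫_𝕜‖ ≤ ‖x₀‖ * ‖z‖ := norm_inner_le_norm x₀ z
    _ ≤ ‖x₀‖ * (C * ‖T z‖) := by gcongr; exact hC z hz
    _ = C * ‖x₀‖ * ‖T z‖ := by ring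

theorem exists_norm_inner_sq_le_of_mem_orthogonal_iInf_ker {ι : Type*} [Fintype ι]
    (L : ι → E →ₗ[𝕜] F) :
    ∃ C > 0, ∀ x₀ ∈ (⨅ i, ker (L i))ᗮ, ∀ x,
      ‖⟪x₀, x⟫_𝕜‖ ^ 2 ≤ C * ‖x₀‖ ^ 2 * ∑ i, ‖L i x‖ ^ 2 := by
  let T : E →ₗ[𝕜] PiLp 2 fun _ : ι => F :=
    (WithLp.linearEquiv 2 𝕜 (ι → F)).symm.toLinearMap ∘ₗ LinearMap.pi L
  have hker : ker T = ⨅ i, ker (L i) := by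
    rw [LinearEquiv.ker_comp, ker_pi]
  have hnorm : ∀ x, ‖T x‖ ^ 2 = ∑ i, ‖L i x‖ ^ 2 := fun x => PiLp.norm_sq_eq_of_L2 _ _
  obtain ⟨C, hC₀, hC⟩ := T.exists_norm_inner_le_of_mem_orthogonal_ker
  refine ⟨C ^ 2, by positivity, fun x₀ hx₀ x => ?_⟩
  rw [← hker] at hx₀
  calc ‖⟪x₀, x⟫_𝕜‖ ^ 2 ≤ (C * ‖x₀‖ * ‖T x‖) ^ 2 := by gcongr; exact hC x₀ hx₀ x
    _ = C ^ 2 * ‖x₀‖ ^ 2 * ∑ i, ‖L i x‖ ^ 2 := by rw [← hnorm]; ring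

end

theorem euclNorm_eq_norm {n : ℕ} (v : Fin n → ℝ) : euclNorm v = ‖WithLp.toLp 2 v‖ := by
  simp [EuclideanSpace.norm_eq, euclNorm]

theorem euclInner_eq_inner {n : ℕ} (u v : Fin n → ℝ) :
    euclInner u v = ⟪WithLp.toLp 2 u, WithLp.toLp 2 v⟫_ℝ := by
  simp [euclInner, PiLp.inner_apply, mul_comm]

theorem exists_bound_of_memVperp (n : ℕ) (B sq : Matrix (Fin n) (Fin n) ℝ) (k : ℕ) :
    ∃ C > 0, ∀ ξ₀, memVperp n B sq k ξ₀ → ∀ ξ, euclInner ξ₀ ξ ^ 2 ≤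
      C * euclNorm ξ₀ ^ 2 * ∑ j ∈ Finset.range (k + 1), euclNorm ((sq * Bᵀ ^ j).mulVec ξ) ^ 2 := by
  obtain ⟨C, hC₀, hC⟩ := exists_norm_inner_sq_le_of_mem_orthogonal_iInf_ker
    fun j : Fin (k + 1) => Matrix.toLpLin 2 2 (sq * Bᵀ ^ (j : ℕ))
  refine ⟨C, hC₀, fun ξ₀ hξ₀ ξ => ?_⟩
  have hmem : WithLp.toLp 2 ξ₀ ∈ (⨅ j : Fin (k + 1),
      LinearMap.ker (Matrix.toLpLin 2 2 (sq * Bᵀ ^ (j : ℕ))))ᗮ := by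
    refine (Submodule.mem_orthogonal' _ _).mpr fun η hη => ?_
    simp only [Submodule.mem_iInf, LinearMap.mem_ker] at hη
    have hη₀ := hξ₀ η.ofLp fun j hj => by
      simpa only [Matrix.ofLp_toLpLin, Matrix.toLin'_apply, WithLp.ofLp_zero] using
        congrArg WithLp.ofLp (hη ⟨j, Nat.lt_succ_of_le hj⟩)
    rwa [euclInner_eq_inner, WithLp.toLp_ofLp] at hη₀
  have hbound := hC _ hmem (WithLp.toLp 2 ξ)
  rw [Real.norm_eq_abs, sq_abs] at hbound
  rw [euclInner_eq_inner, euclNorm_eq_norm, ← Fin.sum_univ_eq_sum_range]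
  simpa only [euclNorm_eq_norm, Matrix.toLpLin_toLp, Matrix.toLin'_apply] using hbound

theorem kIndex_le_and_memVperp {n : ℕ} {B sq : Matrix (Fin n) (Fin n) ℝ} {r : ℕ}
    (hr : IsSmallestr n B sq r) {ξ₀ : Fin n → ℝ} (hξ₀ : memSperp n B sq ξ₀) :
    kIndex n B sq r ξ₀ ≤ r ∧ memVperp n B sq (kIndex n B sq r ξ₀) ξ₀ :=
  Nat.sInf_mem (s := {k | k ≤ r ∧ memVperp n B sq k ξ₀})
    ⟨r, le_rfl, fun η hη => hξ₀ η ((hr.1 η).mp hη)⟩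

theorem statement9_general (n : ℕ)
    (B Q : Matrix (Fin n) (Fin n) ℝ) (hQ : Q.PosSemidef)
    (r : ℕ) (hr : IsSmallestr n B hQ.sqrt r) :
    ∃ M₀ : ℝ, 0 < M₀ ∧
      ∀ ξ₀ : Fin n → ℝ, memSperp n B hQ.sqrt ξ₀ → ∀ ξ : Fin n → ℝ,
        euclInner ξ₀ ξ ^ 2 ≤ M₀ ^ 2 * euclNorm ξ₀ ^ 2 *
          ∑ j ∈ Finset.range (kIndex n B hQ.sqrt r ξ₀ + 1),
            euclNorm ((hQ.sqrt * Bᵀ ^ j).mulVec ξ) ^ 2 := by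
  choose C hC₀ hC using exists_bound_of_memVperp n B hQ.sqrt
  have hM : 0 < ∑ k ∈ Finset.range (r + 1), C k :=
    Finset.sum_pos (fun k _ => hC₀ k) Finset.nonempty_range_add_one
  refine ⟨√(∑ k ∈ Finset.range (r + 1), C k), Real.sqrt_pos.mpr hM, fun ξ₀ hξ₀ ξ => ?_⟩
  obtain ⟨hkr, hkV⟩ := kIndex_le_and_memVperp hr hξ₀
  rw [Real.sq_sqrt hM.le]
  refine (hC _ ξ₀ hkV ξ).trans ?_
  gcongr
  exact Finset.single_le_sum (fun k _ => (hC₀ k).le) (Finset.mem_range_succ_iff.mpr hkr)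

/-- There exists `M₀ > 0` such that for every `ξ₀ ∈ S^⊥` and every `ξ ∈ ℝⁿ`,
`|⟨ξ₀, ξ⟩|² ≤ M₀² |ξ₀|² Σ_{j=0}^{k_{ξ₀}} |√Q (Bᵀ)^j ξ|²`. -/
theorem statement9 (n : ℕ) (hn : 1 ≤ n)
    (B Q : Matrix (Fin n) (Fin n) ℝ) (hQ : Q.PosSemidef)
    (r : ℕ) (hr : IsSmallestr n B hQ.sqrt r) :
    ∃ M₀ : ℝ, 0 < M₀ ∧
      ∀ ξ₀ : Fin n → ℝ, memSperp n B hQ.sqrt ξ₀ → ∀ ξ : Fin n → ℝ,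
        euclInner ξ₀ ξ ^ 2 ≤ M₀ ^ 2 * euclNorm ξ₀ ^ 2 *
          ∑ j ∈ Finset.range (kIndex n B hQ.sqrt r ξ₀ + 1),
            euclNorm ((hQ.sqrt * Bᵀ ^ j).mulVec ξ) ^ 2 :=
  statement9_general n B Q hQ r hr
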